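/- Let d ≥ 3 and let AGL(d,2) be the group of affine transformations x ↦ g(x) + u of the vector space V = (F_2)^d, where g ∈ GL(d,2) and u ∈ V, acting on the v = 2^d points of V. There is no non-trivial Steiner 5-design D on the point set V admitting AGL(d,2) as a block-transitive group of automorphisms. -/

import Mathlib

/-!
For `d = 3` no Steiner `5-(8, k, 1)` design with `5 < k < 8` exists at all: double counting gives
`#B * C(k, 5) = C(8, 5) = 56`, which is divisible by neither `C(6, 5) = 6` nor `C(7, 5) = 21`.

For `d ≥ 4` let `b` be the block through five points of a 3-dimensional subspace `U`. The linear
maps fixing `U` pointwise stabilise `b` and act transitively on `V \ U` (by transvections), so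
either `V \ U ⊆ b` or `b ⊆ U`. In the first case `k ≥ 2^d - 3`, so any two blocks share five
points and `b` would be the only block, i.e. `b = V`. In the second case every block lies in an
affine image of `U`, which cannot contain `0` together with four linearly independent vectors.
-/

open Finset Module Submodule

def IsSteinerSystem {α : Type*} [DecidableEq α] (t : ℕ) (B : Finset (Finset α)) : Prop :=
  ∀ T : Finset α, #T = t → #(B.filter (fun b => T ⊆ b)) = 1

namespace IsSteinerSystem

variable {α : Type*} [DecidableEq α] {t k : ℕ} {B : Finset (Finset α)}

theorem exists_mem_superset (hB : IsSteinerSystem t B) {T : Finset α} (hT : #T = t) :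
    ∃ b ∈ B, T ⊆ b := by
  obtain ⟨b, hb⟩ := card_pos.mp (hB T hT ▸ Nat.one_pos)
  exact ⟨b, (mem_filter.mp hb).1, (mem_filter.mp hb).2⟩

theorem eq_of_subset (hB : IsSteinerSystem t B) {T b₁ b₂ : Finset α} (hT : #T = t)
    (hb₁ : b₁ ∈ B) (hb₂ : b₂ ∈ B) (h₁ : T ⊆ b₁) (h₂ : T ⊆ b₂) : b₁ = b₂ :=
  card_le_one.mp (hB T hT).le _ (mem_filter.mpr ⟨hb₁, h₁⟩) _ (mem_filter.mpr ⟨hb₂, h₂⟩)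

theorem eq_of_le_card_inter (hB : IsSteinerSystem t B) {b₁ b₂ : Finset α} (hb₁ : b₁ ∈ B)
    (hb₂ : b₂ ∈ B) (h : t ≤ #(b₁ ∩ b₂)) : b₁ = b₂ := by
  obtain ⟨T, hT, hTcard⟩ := exists_subset_card_eq h
  exact hB.eq_of_subset hTcard hb₁ hb₂ (hT.trans inter_subset_left) (hT.trans inter_subset_right)

theorem mapsTo_of_eqOn_id (hB : IsSteinerSystem t B) {f : α → α}
    (hf : ∀ b ∈ B, b.image f ∈ B) {T b : Finset α} (hT : #T = t) (hb : b ∈ B) (hTb : T ⊆ b)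
    (hfT : Set.EqOn f id T) : Set.MapsTo f b b := by
  have hfb : b.image f = b :=
    hB.eq_of_subset hT (hf b hb) hb (fun y hy => mem_image.mpr ⟨y, hTb hy, hfT hy⟩) hTb
  exact fun x hx => hfb ▸ mem_image_of_mem f hx

theorem card_mul_choose [Fintype α] (hB : IsSteinerSystem t B) (hk : ∀ b ∈ B, #b = k) :
    #B * k.choose t = (Fintype.card α).choose t := by
  have := card_mul_eq_card_mul (s := B) (t := powersetCard t univ) (fun b T => T ⊆ b)
    (m := k.choose t) (n := 1) (fun b hb => ?_) (fun T hT => ?_)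
  · simpa using this
  · rw [bipartiteAbove, ← hk b hb, ← card_powersetCard]
    congr 1
    ext T
    simp [mem_powersetCard, and_comm]
  · exact hB T (mem_powersetCard.mp hT).2

theorem eq_univ_of_add_card_le [Fintype α] (hB : IsSteinerSystem t B) (ht : 0 < t)
    (hk : ∀ b ∈ B, #b = k) (hkv : t + Fintype.card α ≤ 2 * k) {b : Finset α} (hb : b ∈ B) :
    b = univ := by
  have hkα : k ≤ Fintype.card α := hk b hb ▸ card_le_univ b
  refine eq_univ_of_forall fun q => ?_
  obtain ⟨T, hqT, -, hT⟩ := exists_subsuperset_card_eq (subset_univ {q})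
    (by simpa [Nat.one_le_iff_ne_zero] using ht.ne') (by rw [card_univ]; omega)
  obtain ⟨b', hb', hTb'⟩ := hB.exists_mem_superset hT
  have hb'b : b' = b := hB.eq_of_le_card_inter hb' hb <| by
    have := card_inter_add_card_union b' b
    have := card_le_univ (b' ∪ b)
    rw [hk b' hb', hk b hb] at *
    omega
  exact hb'b ▸ hTb' (hqT (mem_singleton_self q))

theorem card_add_lt_two_mul_card [Fintype α] (hB : IsSteinerSystem t B) (ht : 0 < t)
    (hk : ∀ b ∈ B, #b = k) (hkv : k < Fintype.card α) {A T b : Finset α} (hb : b ∈ B)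
    (hTA : T ⊆ A) (hT : #T = t) (hTb : T ⊆ b) (hAb : Aᶜ ⊆ b) :
    Fintype.card α + t < 2 * #A := by
  have hcard := card_le_card (union_subset hAb hTb)
  rw [card_union_of_disjoint (disjoint_compl_left.mono_right hTA), card_compl, hT,
    hk b hb] at hcard
  by_contra! h
  have hbuniv := hB.eq_univ_of_add_card_le ht hk (by have := card_le_univ A; omega) hb
  have := hk b hb
  rw [hbuniv, card_univ] at this
  omega

theorem not_five_of_card_eq_eight [Fintype α] (hα : Fintype.card α = 8)
    (hk : ∀ b ∈ B, #b = k) (h5k : 5 < k) (hk8 : k < 8) : ¬IsSteinerSystem 5 B := fun hB => by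
  have hcount := hB.card_mul_choose hk
  rw [hα] at hcount
  interval_cases k <;> simp [Nat.choose] at hcount <;> omega

end IsSteinerSystem

theorem Submodule.card_toFinset {K V : Type*} [Field K] [Fintype K] [AddCommGroup V] [Module K V]
    [Fintype V] (U : Submodule K V) [Fintype (U : Set V)] :
    #(U : Set V).toFinset = Fintype.card K ^ finrank K U := by
  rw [Set.toFinset_card, ← Nat.card_eq_fintype_card, SetLike.coe_sort_coe,
    natCard_eq_pow_finrank (K := K), Nat.card_eq_fintype_card]

theorem finrank_span_le_of_subset_image {K V : Type*} [Field K] [AddCommGroup V] [Module K V]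
    [FiniteDimensional K V] (U : Submodule K V) (g : V ≃ₗ[K] V) (u : V) {S : Set V}
    (h0 : (0 : V) ∈ S) (hS : S ⊆ (fun x => g x + u) '' U) :
    finrank K (span K S) ≤ finrank K U := by
  obtain ⟨x₀, hx₀, hu⟩ := hS h0
  have hspan : span K S ≤ U.map (g : V →ₗ[K] V) := by
    refine span_le.mpr fun y hy => ?_
    obtain ⟨x, hx, rfl⟩ := hS hy
    refine ⟨x - x₀, sub_mem hx hx₀, ?_⟩
    simp [sub_eq_add_neg, eq_neg_of_add_eq_zero_right hu]
  exact (finrank_mono hspan).trans (LinearEquiv.finrank_map_eq g U).le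

theorem IsSteinerSystem.finrank_span_le_of_subset {K V : Type*} [Field K] [AddCommGroup V]
    [Module K V] [FiniteDimensional K V] [DecidableEq V] {t : ℕ} {B : Finset (Finset V)}
    (hB : IsSteinerSystem t B)
    (hBT : ∀ b₁ ∈ B, ∀ b₂ ∈ B, ∃ (g : V ≃ₗ[K] V) (u : V), b₁.image (fun x => g x + u) = b₂)
    (U : Submodule K V) {b : Finset V} (hb : b ∈ B) (hbU : (b : Set V) ⊆ U) {S : Finset V}
    (h0 : (0 : V) ∈ S) (hS : #S = t) : finrank K (span K (S : Set V)) ≤ finrank K U := by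
  obtain ⟨b', hb', hSb'⟩ := hB.exists_mem_superset hS
  obtain ⟨g, u, rfl⟩ := hBT b hb b' hb'
  refine finrank_span_le_of_subset_image U g u h0 ((coe_subset.mpr hSb').trans ?_)
  rw [coe_image]
  exact Set.image_mono hbU

theorem LinearIndependent.card_insert_zero_image {K V : Type*} [Field K] [AddCommGroup V]
    [Module K V] [DecidableEq V] {n : ℕ} {v : Fin n → V} (hv : LinearIndependent K v) :
    #(insert 0 (univ.image v)) = n + 1 := by
  rw [card_insert_of_notMem, card_image_of_injective _ hv.injective, card_fin]
  simpa [eq_comm] using hv.ne_zero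

theorem LinearIndependent.finrank_span_insert_zero_image {K V : Type*} [Field K] [AddCommGroup V]
    [Module K V] [DecidableEq V] {n : ℕ} {v : Fin n → V} (hv : LinearIndependent K v) :
    finrank K (span K ((insert 0 (univ.image v) : Finset V) : Set V)) = n := by
  rw [coe_insert, span_insert_zero, coe_image, coe_univ, Set.image_univ, finrank_span_eq_card hv,
    Fintype.card_fin]

section ZModTwo

variable {V : Type*} [AddCommGroup V] [Module (ZMod 2) V]

/-- `σ` is the transvection `x ↦ x + φ x • (s + s')` for a functional `φ` vanishing on
`W ⊔ ⟨s + s'⟩` with `φ s = 1`; over `𝔽₂`, `s, s' ∉ W` forces `s ∉ W ⊔ ⟨s + s'⟩`. -/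
theorem ZModModule.exists_linearEquiv_eqOn_id_and_apply_eq (W : Submodule (ZMod 2) V)
    {s s' : V} (hs : s ∉ W) (hs' : s' ∉ W) :
    ∃ σ : V ≃ₗ[ZMod 2] V, Set.EqOn σ id W ∧ σ s = s' := by
  have zero_or_one : ∀ c : ZMod 2, c = 0 ∨ c = 1 := by decide
  have hsK : s ∉ W ⊔ span (ZMod 2) {s + s'} := by
    rw [Submodule.mem_sup]
    rintro ⟨w, hw, y, hy, hwy⟩
    obtain ⟨c, rfl⟩ := mem_span_singleton.mp hy
    obtain rfl | rfl := zero_or_one c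
    · rw [zero_smul, add_zero] at hwy
      exact hs (hwy ▸ hw)
    · rw [one_smul, add_left_comm, add_eq_left] at hwy
      have : s' = w := by
        rw [← ZModModule.neg_eq_self w, eq_neg_iff_add_eq_zero, add_comm, hwy]
      exact hs' (this ▸ hw)
  obtain ⟨φ, hφs, hφK⟩ := exists_dual_map_eq_bot_of_notMem hsK inferInstance
  have hφ : ∀ x ∈ W ⊔ span (ZMod 2) {s + s'}, φ x = 0 := fun x hx =>
    LinearMap.le_ker_iff_map.mpr hφK hx
  replace hφs : φ s = 1 := (zero_or_one _).resolve_left hφs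
  refine ⟨LinearEquiv.transvection (hφ _ (mem_sup_right (mem_span_singleton_self _))),
    fun x hx => ?_, ?_⟩
  · rw [LinearEquiv.transvection.apply, hφ x (mem_sup_left hx), zero_smul, add_zero, id]
  · rw [LinearEquiv.transvection.apply, hφs, one_smul, ← add_assoc, ZModModule.add_self,
      zero_add]

theorem IsSteinerSystem.subset_or_forall_notMem_mem [DecidableEq V] {t : ℕ}
    {B : Finset (Finset V)} (hB : IsSteinerSystem t B)
    (hGL : ∀ g : V ≃ₗ[ZMod 2] V, ∀ b ∈ B, b.image g ∈ B) (U : Submodule (ZMod 2) V)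
    {T b : Finset V} (hTU : (T : Set V) ⊆ U) (hT : #T = t) (hb : b ∈ B) (hTb : T ⊆ b) :
    (b : Set V) ⊆ U ∨ ∀ x ∉ U, x ∈ b := by
  refine or_iff_not_imp_left.mpr fun hbU x hx => ?_
  obtain ⟨s, hsb, hsU⟩ := Set.not_subset.mp hbU
  obtain ⟨σ, hσU, hσs⟩ := ZModModule.exists_linearEquiv_eqOn_id_and_apply_eq U hsU hx
  exact hσs ▸ hB.mapsTo_of_eqOn_id (hGL σ) hT hb hTb (hσU.mono hTU) hsb

end ZModTwo

/-- Let `d ≥ 3` and let `AGL(d,2)` act as the affine maps `x ↦ g x + u`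
(`g ∈ GL(d,2)`, `u ∈ V`) on the `v = 2^d` points of `V = (F₂)^d`. There is no non-trivial
Steiner 5-design on `V` admitting `AGL(d,2)` as a block-transitive group of automorphisms. -/
theorem stmt_14 (d : ℕ) (hd : 3 ≤ d)
    (k : ℕ) (htk : 5 < k) (hkv : k < 2 ^ d)
    (B : Finset (Finset (Fin d → ZMod 2)))
    (hblocks : ∀ b ∈ B, b.card = k)
    (hdesign : ∀ T : Finset (Fin d → ZMod 2), T.card = 5 →
      (B.filter (fun b => T ⊆ b)).card = 1)
    (hAut : ∀ (g : (Fin d → ZMod 2) ≃ₗ[ZMod 2] (Fin d → ZMod 2)) (u : Fin d → ZMod 2),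
      ∀ b ∈ B, b.image (fun x => g x + u) ∈ B)
    (hBT : ∀ b₁ ∈ B, ∀ b₂ ∈ B,
      ∃ (g : (Fin d → ZMod 2) ≃ₗ[ZMod 2] (Fin d → ZMod 2)) (u : Fin d → ZMod 2),
        b₁.image (fun x => g x + u) = b₂) :
    False := by
  have hB : IsSteinerSystem 5 B := hdesign
  classical
  have hv : Fintype.card (Fin d → ZMod 2) = 2 ^ d := by simp
  obtain rfl | hd4 : d = 3 ∨ 4 ≤ d := by omega
  · exact IsSteinerSystem.not_five_of_card_eq_eight (by simp) hblocks htk hkv hB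
  have hindep (n : ℕ) (hn : n ≤ d) :=
    (Pi.basisFun (ZMod 2) (Fin d)).linearIndependent.comp _ (Fin.castLE_injective hn)
  set U := span (ZMod 2) (Set.range (Pi.basisFun (ZMod 2) (Fin d) ∘ Fin.castLE hd))
  have hU : finrank (ZMod 2) U = 3 := by
    rw [finrank_span_eq_card (hindep 3 hd), Fintype.card_fin]
  set Uf := (U : Set (Fin d → ZMod 2)).toFinset
  have hUf : #Uf = 2 ^ 3 := by rw [Submodule.card_toFinset, hU, ZMod.card]
  obtain ⟨T, hTU, hT⟩ := exists_subset_card_eq (show 5 ≤ #Uf by omega)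
  obtain ⟨b, hb, hTb⟩ := hB.exists_mem_superset hT
  have hGL (g : (Fin d → ZMod 2) ≃ₗ[ZMod 2] (Fin d → ZMod 2)) (b) (hb : b ∈ B) :
      b.image g ∈ B := by simpa using hAut g 0 b hb
  rcases hB.subset_or_forall_notMem_mem hGL U (Set.subset_toFinset.mp hTU) hT hb hTb
    with hbU | hbU
  · have := hB.finrank_span_le_of_subset hBT U hb hbU (mem_insert_self _ _)
      (hindep 4 hd4).card_insert_zero_image
    rw [(hindep 4 hd4).finrank_span_insert_zero_image, hU] at this
    omega
  · have := hB.card_add_lt_two_mul_card (by norm_num) hblocks (hv ▸ hkv) hb hTU hT hTb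
      (fun x hx => hbU x (by simpa [Uf] using hx))
    rw [hv, hUf] at this
    have : 2 ^ 4 ≤ 2 ^ d := Nat.pow_le_pow_right (by norm_num) hd4
    omega
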